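/- arXiv:2005.09125 — 2 statements merged into one kernel-verified Lean document; each statement's English description precedes it below -/
import Mathlib

section
/- Let A be an FANBW and G^e_{w,A} the co-deterministic run DAG of A over w. Then w ∉ L(A) if and only if there exists a stable level k > 0 in G^e_{w,A}, i.e., a level such that every F-vertex at a level ≥ k is finite (no ω-branch of G^e_{w,A} starts from it). -/
open Classical

variable {Q : Type} {A : Type}

/-- A nondeterministic Büchi automaton on words (NBW). -/
structure NBW (Q : Type) (A : Type) where
  I : Set Q
  δ : Q → A → Set Q
  F : Set Q

namespace NBW

/-- Transition function extended to sets of states. -/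
def δset (M : NBW Q A) (S : Set Q) (a : A) : Set Q := ⋃ q ∈ S, M.δ q a

/-- A run of `M` on the word `w`. -/
def IsRun (M : NBW Q A) (w : ℕ → A) (ρ : ℕ → Q) : Prop :=
  ρ 0 ∈ M.I ∧ ∀ i, ρ (i + 1) ∈ M.δ (ρ i) (w i)

/-- An accepting run: a run visiting accepting states infinitely often. -/
def IsAccRun (M : NBW Q A) (w : ℕ → A) (ρ : ℕ → Q) : Prop :=
  M.IsRun w ρ ∧ ∀ n, ∃ m ≥ n, ρ m ∈ M.F

/-- `M` accepts the word `w`. -/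
def Accepts (M : NBW Q A) (w : ℕ → A) : Prop := ∃ ρ, M.IsAccRun w ρ

/-- `M` is finitely ambiguous (an FANBW): each word has finitely many accepting runs. -/
def FA (M : NBW Q A) : Prop := ∀ w : ℕ → A, {ρ | M.IsAccRun w ρ}.Finite

/-- Completeness of the transition function. -/
def Complete (M : NBW Q A) : Prop := ∀ (q : Q) (a : A), (M.δ q a).Nonempty

/-- Reverse determinism: each state has at most one `a`-predecessor. -/
def ReverseDet (M : NBW Q A) : Prop :=
  ∀ (q' : Q) (a : A), {q | q' ∈ M.δ q a}.Subsingleton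

/-- The set of states at level `l` of the run DAG `G_{w,M}`. -/
def V (M : NBW Q A) (w : ℕ → A) : ℕ → Set Q
  | 0 => M.I
  | l + 1 => M.δset (V M w l) (w l)

/-- Edge of the run DAG `G_{w,M}` from `⟨q,l⟩` to `⟨q',l+1⟩`. -/
def Edge (M : NBW Q A) (w : ℕ → A) (l : ℕ) (q q' : Q) : Prop :=
  q ∈ M.V w l ∧ q' ∈ M.δ q (w l)

/-- An ω-branch of the run DAG `G_{w,M}` (identified with its sequence of states). -/
def IsBranch (M : NBW Q A) (w : ℕ → A) (b : ℕ → Q) : Prop :=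
  b 0 ∈ M.I ∧ ∀ l, M.Edge w l (b l) (b (l + 1))

/-- Edge of the co-deterministic run DAG `G^e_{w,M}`: only the edge from the
minimal-index predecessor (w.r.t. the linear order enumerating `Q`) is kept. -/
def EdgeE [LinearOrder Q] (M : NBW Q A) (w : ℕ → A) (l : ℕ) (q q' : Q) : Prop :=
  IsLeast {p | p ∈ M.V w l ∧ q' ∈ M.δ p (w l)} q

/-- An ω-branch of the co-deterministic run DAG `G^e_{w,M}`. -/
def IsBranchE [LinearOrder Q] (M : NBW Q A) (w : ℕ → A) (b : ℕ → Q) : Prop :=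
  b 0 ∈ M.I ∧ ∀ l, M.EdgeE w l (b l) (b (l + 1))

/-- A branch of `G^e_{w,M}` starting from vertex `⟨q,l⟩`. -/
def BranchFromE [LinearOrder Q] (M : NBW Q A) (w : ℕ → A) (l : ℕ) (q : Q) (b : ℕ → Q) : Prop :=
  b 0 = q ∧ q ∈ M.V w l ∧ ∀ i, M.EdgeE w (l + i) (b i) (b (i + 1))

/-- The vertex `⟨q,l⟩` of `G^e_{w,M}` is finite: no infinite branch starts from it. -/
def FiniteVertexE [LinearOrder Q] (M : NBW Q A) (w : ℕ → A) (l : ℕ) (q : Q) : Prop :=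
  ¬ ∃ b, M.BranchFromE w l q b

/-- The minimal set of predecessors `S_min` of `δ(S,b)` within `S`. -/
def Smin [LinearOrder Q] (M : NBW Q A) (S : Set Q) (b : A) : Set Q :=
  {q | ∃ q' ∈ M.δset S b, IsLeast {p | p ∈ S ∧ q' ∈ M.δ p b} q}

/-- The reduced transition function `δ^e` for the level with state set `S` and letter `b`. -/
def δe [LinearOrder Q] (M : NBW Q A) (S : Set Q) (b : A) (S₁ : Set Q) : Set Q :=
  M.δset (S₁ ∩ M.Smin S b) b

/-- The reduced transition function at level `ℓ` of `G^e_{w,M}`. -/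
def δeAt [LinearOrder Q] (M : NBW Q A) (w : ℕ → A) (ℓ : ℕ) (S₁ : Set Q) : Set Q :=
  M.δe (M.V w ℓ) (w ℓ) S₁

end NBW

section DAG

variable (E : ℕ → Q → Q → Prop) (U : Set (Q × ℕ))

/-- An infinite branch from vertex `v` staying inside the vertex set `U`,
following the edge relation `E`. -/
def DagBranchIn (v : Q × ℕ) (b : ℕ → Q) : Prop :=
  b 0 = v.1 ∧ (∀ i, (b i, v.2 + i) ∈ U) ∧ ∀ i, E (v.2 + i) (b i) (b (i + 1))

/-- Vertex `v` is finite in the sub-DAG `U`: no infinite branch from `v` inside `U`. -/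
def DagFiniteIn (v : Q × ℕ) : Prop := ¬ ∃ b, DagBranchIn E U v b

/-- One-step reachability inside `U`. -/
def DagStep (v v' : Q × ℕ) : Prop :=
  v ∈ U ∧ v' ∈ U ∧ v'.2 = v.2 + 1 ∧ E v.2 v.1 v'.1

/-- Vertex `v` is F-free in `U`: not finite, and no F-vertex reachable from it in `U`. -/
def DagFFreeIn (F : Set Q) (v : Q × ℕ) : Prop :=
  ¬ DagFiniteIn E U v ∧ ∀ v', Relation.ReflTransGen (DagStep E U) v v' → v'.1 ∉ F

/-- The rank-stripping sequence of sub-DAGs: `G⁰ = G0`; `G^{2i+1}` removes the finite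
vertices of `G^{2i}`; `G^{2i+2}` removes the F-free vertices of `G^{2i+1}`. -/
def DagStrip (F : Set Q) (G0 : Set (Q × ℕ)) : ℕ → Set (Q × ℕ)
  | 0 => G0
  | i + 1 =>
      let U' := DagStrip F G0 i
      if i % 2 = 0 then U' \ {v | DagFiniteIn E U' v}
      else U' \ {v | DagFFreeIn E U' F v}

end DAG

namespace NBW

/-- The vertex set of the run DAG `G_{w,M}` (also of `G^e_{w,M}`). -/
def DagVertices (M : NBW Q A) (w : ℕ → A) : Set (Q × ℕ) := {v | v.1 ∈ M.V w v.2}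

/-- Level rankings with maximum rank 2: `none` plays the role of `⊥`. -/
def IsLR (M : NBW Q A) (f : Q → Option (Fin 3)) : Prop :=
  ∀ q r, f q = some r → q ∈ M.F → (r : ℕ) % 2 = 0

/-- Domain of a level ranking. -/
def rankDom (f : Q → Option (Fin 3)) : Set Q := {q | (f q).isSome}

/-- Coverage relation `f' ⪯^{δ^e}_a f` for level rankings. -/
def Covers [LinearOrder Q] (M : NBW Q A) (a : A) (f f' : Q → Option (Fin 3)) : Prop :=
  (∀ q r q', f q = some r → q' ∈ M.δe (rankDom f) a {q} →
    ∃ r', f' q' = some r' ∧ r' ≤ r) ∧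
  (∀ q', (∀ q, q' ∈ M.δe (rankDom f) a {q} → f q = none) → f' q' = none)

/-- The rank-based complement of an FANBW, with maximum rank 2 and the reduced
transition function `δ^e`. -/
noncomputable def rankComplement [LinearOrder Q] (M : NBW Q A) :
    NBW ((Q → Option (Fin 3)) × Set Q) A where
  I := {s | s.2 = ∅ ∧ ∀ q, s.1 q = if q ∈ M.I then some 2 else none}
  δ := fun s a =>
    {s' | M.Covers a s.1 s'.1 ∧ M.IsLR s'.1 ∧
      ((s.2 ≠ ∅ ∧
          s'.2 = M.δe (rankDom s.1) a s.2 \ {q | ∃ r, s'.1 q = some r ∧ (r : ℕ) % 2 = 1}) ∨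
       (s.2 = ∅ ∧ s'.2 = {q | ∃ r, s'.1 q = some r ∧ (r : ℕ) % 2 = 0}))}
  F := {s | s.2 = ∅}

/-- Slice-based DAG `G^s_{w,M}`: the set at position `p` of level `l`.
Level `0` consists of `I \ F` (position 0) and `I ∩ F` (position 1); from the
set at position `j` of level `l`, position `2j` of level `l+1` holds the non-`F`
successors and position `2j+1` the `F`-successors, keeping only the rightmost
occurrence of each state. -/
noncomputable def sliceSet (M : NBW Q A) (w : ℕ → A) : ℕ → ℕ → Set Q
  | 0, p => if p = 0 then M.I \ M.F else if p = 1 then M.I ∩ M.F else ∅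
  | l + 1, p =>
      let S' : ℕ → Set Q := fun q =>
        if q % 2 = 0 then M.δset (sliceSet M w l (q / 2)) (w l) \ M.F
        else M.δset (sliceSet M w l (q / 2)) (w l) ∩ M.F
      S' p \ ⋃ q ∈ Set.Ioi p, S' q

/-- An ω-branch of the slice-based DAG `G^s_{w,M}`, given by the positions it visits. -/
def IsSliceBranch (M : NBW Q A) (w : ℕ → A) (g : ℕ → ℕ) : Prop :=
  (∀ l, M.sliceSet w l (g l) ≠ ∅) ∧ ∀ l, g (l + 1) / 2 = g l

/-- There is an infinite branch of `G^s_{w,M}` starting from position `p` of level `l`. -/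
def SliceBranchFrom (M : NBW Q A) (w : ℕ → A) (l p : ℕ) : Prop :=
  ∃ g : ℕ → ℕ, g 0 = p ∧ (∀ i, M.sliceSet w (l + i) (g i) ≠ ∅) ∧ ∀ i, g (i + 1) / 2 = g i

/-- Accepting-phase transition of the `(N,C,B)` construction. -/
noncomputable def ncbStep [LinearOrder Q] (M : NBW Q A) (a : A)
    (t : Set Q × Set Q × Set Q) : Set Q × Set Q × Set Q :=
  (M.δe t.1 a t.1,
   M.δe t.1 a t.2.1 ∪ (M.δe t.1 a t.1 ∩ M.F),
   if t.2.2 = ∅ then M.δe t.1 a t.2.1 ∪ (M.δe t.1 a t.1 ∩ M.F) else M.δe t.1 a t.2.2)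

/-- The slice-based specialized complement of an FANBW: the `(N,C,B)` construction. -/
noncomputable def ncbComplement [LinearOrder Q] (M : NBW Q A) :
    NBW (Set Q ⊕ Set Q × Set Q × Set Q) A where
  I := {Sum.inl M.I}
  δ := fun s a =>
    match s with
    | Sum.inl S => {Sum.inl (M.δe S a S), Sum.inr (M.ncbStep a (S, S ∩ M.F, S ∩ M.F))}
    | Sum.inr t => {Sum.inr (M.ncbStep a t)}
  F := {s | ∃ t : Set Q × Set Q × Set Q, s = Sum.inr t ∧ t.2.2 = ∅}

/-- Trajectory of the deterministic accepting phase of the `(N,C,B)` construction. -/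
noncomputable def ncbTraj [LinearOrder Q] (M : NBW Q A) (w : ℕ → A)
    (t₀ : Set Q × Set Q × Set Q) : ℕ → Set Q × Set Q × Set Q
  | 0 => t₀
  | i + 1 => M.ncbStep (w i) (ncbTraj M w t₀ i)

end NBW

/-!
In `G^e_{w,M}` every vertex keeps a single incoming edge, so two ω-branches that meet at some
level agree below it; distinct ω-branches are therefore eventually disjoint, there are at most
`|Q|` of them, and if infinite `F`-vertices occur at unboundedly high levels then a single
ω-branch visits `F` infinitely often.

Conversely, an accepting run `ρ` leaves `G^e_{w,M}` at level `i` when `ρ i` is not the least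
predecessor of `ρ (i + 1)`. Rerouting the prefix of `ρ` through that least predecessor gives
another accepting run, and reroutings at different levels differ, so by finite ambiguity `ρ`
eventually stays in `G^e_{w,M}`; past a stable level its next `F`-vertex is then not finite.
-/

open Filter

namespace NBW

variable {M : NBW Q A} {w : ℕ → A}

theorem mem_V_succ {l : ℕ} {q : Q} : q ∈ M.V w (l + 1) ↔ ∃ p ∈ M.V w l, q ∈ M.δ p (w l) := by
  simp [V, δset]

theorem IsRun.mem_V {ρ : ℕ → Q} (h : M.IsRun w ρ) (i : ℕ) : ρ i ∈ M.V w i := by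
  induction i with
  | zero => exact h.1
  | succ i ih => exact mem_V_succ.2 ⟨ρ i, ih, h.2 i⟩

theorem exists_run_prefix {l : ℕ} {q : Q} (hq : q ∈ M.V w l) :
    ∃ p : ℕ → Q, p l = q ∧ p 0 ∈ M.I ∧ ∀ i < l, p (i + 1) ∈ M.δ (p i) (w i) := by
  induction l generalizing q with
  | zero => exact ⟨fun _ => q, rfl, hq, fun i hi => absurd hi i.not_lt_zero⟩
  | succ l ih =>
    obtain ⟨q₀, hq₀, hq⟩ := mem_V_succ.1 hq
    obtain ⟨p, hpl, hp0, hp⟩ := ih hq₀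
    refine ⟨Function.update p (l + 1) q, Function.update_self .., ?_, fun i hi => ?_⟩
    · rwa [Function.update_of_ne (by omega)]
    · rcases Nat.lt_succ_iff_lt_or_eq.1 hi with hi | rfl
      · rw [Function.update_of_ne (by omega), Function.update_of_ne (by omega)]
        exact hp i hi
      · rw [Function.update_self, Function.update_of_ne (by omega), hpl]
        exact hq

theorem IsRun.splice {p ρ : ℕ → Q} {l : ℕ} (hρ : M.IsRun w ρ) (hp0 : p 0 ∈ M.I)
    (hp : ∀ i < l, p (i + 1) ∈ M.δ (p i) (w i)) (hl : ρ (l + 1) ∈ M.δ (p l) (w l)) :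
    M.IsRun w fun j => if j ≤ l then p j else ρ j := by
  refine ⟨by simpa using hp0, fun i => ?_⟩
  rcases lt_trichotomy i l with hi | rfl | hi
  · simpa [hi.le, Nat.succ_le_of_lt hi] using hp i hi
  · simpa using hl
  · simpa [hi.not_ge, (Nat.lt_succ_of_lt hi).not_ge] using hρ.2 i

theorem IsAccRun.of_eq_of_lt {ρ σ : ℕ → Q} {l : ℕ} (hρ : M.IsAccRun w ρ) (hσ : M.IsRun w σ)
    (h : ∀ j > l, σ j = ρ j) : M.IsAccRun w σ := by
  refine ⟨hσ, fun n => ?_⟩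
  obtain ⟨m, hm, hmF⟩ := hρ.2 (max n (l + 1))
  exact ⟨m, by omega, by rwa [h m (by omega)]⟩

theorem exists_edgeE [Finite Q] [LinearOrder Q] {l : ℕ} {p q : Q} (hp : p ∈ M.V w l)
    (hq : q ∈ M.δ p (w l)) : ∃ p', M.EdgeE w l p' q := by
  obtain ⟨p', hp', hmin⟩ := Set.exists_min_image {p' | p' ∈ M.V w l ∧ q ∈ M.δ p' (w l)} id
    (Set.toFinite _) ⟨p, hp, hq⟩
  exact ⟨p', hp', fun x hx => hmin x hx⟩

theorem IsAccRun.exists_reroute [Finite Q] [LinearOrder Q] {ρ : ℕ → Q} (hρ : M.IsAccRun w ρ)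
    {i : ℕ} (hi : ¬ M.EdgeE w i (ρ i) (ρ (i + 1))) :
    ∃ σ, M.IsAccRun w σ ∧ σ i ≠ ρ i ∧ ∀ j > i, σ j = ρ j := by
  obtain ⟨p, hp⟩ := exists_edgeE (hρ.1.mem_V i) (hρ.1.2 i)
  obtain ⟨pre, hpre, hpre0, hpreδ⟩ := exists_run_prefix hp.1.1
  have htail : ∀ j > i, (if j ≤ i then pre j else ρ j) = ρ j := fun j hj => if_neg (by omega)
  refine ⟨_, hρ.of_eq_of_lt (hρ.1.splice hpre0 hpreδ (hpre ▸ hp.1.2)) htail, ?_, htail⟩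
  rintro (heq : ite _ _ _ = _)
  rw [if_pos le_rfl, hpre] at heq
  exact hi (heq ▸ hp)

theorem IsAccRun.eventually_edgeE [Finite Q] [LinearOrder Q] (hFA : M.FA) {ρ : ℕ → Q}
    (hρ : M.IsAccRun w ρ) : ∀ᶠ i in atTop, M.EdgeE w i (ρ i) (ρ (i + 1)) := by
  rw [← Nat.cofinite_eq_atTop, eventually_cofinite]
  have : Nonempty Q := ⟨ρ 0⟩
  choose! σ hσacc hσne hσeq using fun i (hi : ¬ M.EdgeE w i (ρ i) (ρ (i + 1))) =>
    hρ.exists_reroute hi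
  refine Set.Finite.of_finite_image (f := σ) ((hFA w).subset ?_) fun i hi j hj hij => ?_
  · rintro _ ⟨i, hi, rfl⟩
    exact hσacc i hi
  · by_contra hne
    wlog hlt : i < j generalizing i j
    · exact this j hj i hi hij.symm (Ne.symm hne) (by omega)
    -- `σ i` already follows `ρ` at level `j`, where `σ j` leaves it.
    exact hσne j hj (by rw [← hij]; exact hσeq i hi j hlt)

theorem IsBranchE.isRun [LinearOrder Q] {b : ℕ → Q} (hb : M.IsBranchE w b) : M.IsRun w b :=
  ⟨hb.1, fun l => (hb.2 l).1.2⟩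

theorem IsBranchE.eq_of_eq_of_le [LinearOrder Q] {b b' : ℕ → Q} (hb : M.IsBranchE w b)
    (hb' : M.IsBranchE w b') {n m : ℕ} (hn : b n = b' n) (hm : m ≤ n) : b m = b' m := by
  induction n with
  | zero => rwa [Nat.le_zero.1 hm]
  | succ n ih =>
    rcases hm.lt_or_eq with hm | rfl
    · exact ih ((hb.2 n).unique (by rw [hn]; exact hb'.2 n)) (by omega)
    · exact hn

theorem IsBranchE.eventually_ne [LinearOrder Q] {b b' : ℕ → Q} (hb : M.IsBranchE w b)
    (hb' : M.IsBranchE w b') (hne : b ≠ b') : ∀ᶠ n in atTop, b n ≠ b' n := by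
  obtain ⟨m, hm⟩ := Function.ne_iff.1 hne
  exact eventually_atTop.2 ⟨m, fun n hn h => hm (hb.eq_of_eq_of_le hb' h hn)⟩

theorem finite_setOf_isBranchE [Finite Q] [LinearOrder Q] : {b | M.IsBranchE w b}.Finite := by
  have := Fintype.ofFinite Q
  by_contra hinf
  obtain ⟨t, hts, ht⟩ := Set.Infinite.exists_subset_card_eq hinf (Fintype.card Q + 1)
  have hsep : ∀ᶠ n in atTop, ∀ b ∈ t, ∀ b' ∈ t, b ≠ b' → b n ≠ b' n := by
    simp only [eventually_all_finset, eventually_imp_distrib_left]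
    exact fun b hb b' hb' => (hts hb).eventually_ne (hts hb')
  obtain ⟨N, hN⟩ := hsep.exists
  have hcard := Finset.card_le_card_of_injOn (fun b => b N) (t := Finset.univ)
    (fun _ _ => Finset.mem_coe.2 (Finset.mem_univ _))
    fun b hb b' hb' => not_imp_not.1 (hN b hb b' hb')
  rw [ht, Finset.card_univ] at hcard
  omega

theorem BranchFromE.exists_isBranchE [Finite Q] [LinearOrder Q] {l : ℕ} {q : Q} {b : ℕ → Q}
    (hb : M.BranchFromE w l q b) : ∃ c, M.IsBranchE w c ∧ ∀ i, c (l + i) = b i := by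
  induction l generalizing q b with
  | zero => exact ⟨b, ⟨hb.1 ▸ hb.2.1, fun i => by simpa using hb.2.2 i⟩, fun i => by simp⟩
  | succ l ih =>
    obtain ⟨q₀, hq₀, hq⟩ := mem_V_succ.1 hb.2.1
    obtain ⟨p, hp⟩ := exists_edgeE hq₀ hq
    have hb' : M.BranchFromE w l p fun i => if i = 0 then p else b (i - 1) := by
      refine ⟨rfl, hp.1.1, fun i => ?_⟩
      rcases i with _ | i
      · simpa [hb.1] using hp
      · simpa [show l + (i + 1) = l + 1 + i by omega] using hb.2.2 i
    obtain ⟨c, hc, hcb⟩ := ih hb'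
    exact ⟨c, hc, fun i => by simpa [show l + (i + 1) = l + 1 + i by omega] using hcb (i + 1)⟩

theorem accepts_of_frequently_exists_infinite_vertex_mem_F [Finite Q] [LinearOrder Q]
    (h : ∃ᶠ l in atTop, ∃ q ∈ M.V w l, q ∈ M.F ∧ ¬ M.FiniteVertexE w l q) : M.Accepts w := by
  have hfreq : ∃ᶠ m in atTop, ∃ c ∈ {b | M.IsBranchE w b}, c m ∈ M.F := by
    refine h.mono fun l ⟨q, _, hqF, hinf⟩ => ?_
    obtain ⟨b, hb⟩ := not_not.1 hinf
    obtain ⟨c, hc, hcb⟩ := hb.exists_isBranchE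
    exact ⟨c, hc, (by simpa [hb.1] using hcb 0 : c l = q) ▸ hqF⟩
  obtain ⟨c, hc, hcF⟩ := finite_setOf_isBranchE.frequently_exists.1 hfreq
  exact ⟨c, hc.isRun, frequently_atTop.1 hcF⟩

end NBW

/-- stable level in nonaccepting co-deterministic DAGs: for an FANBW `M`,
`w ∉ L(M)` iff there exists a stable level `k > 0` in `G^e_{w,M}`, i.e. every `F`-vertex
at a level `≥ k` is finite (no infinite branch of `G^e_{w,M}` starts from it). -/
theorem not_accepts_iff_stable_level
    [Fintype Q] [LinearOrder Q] (M : NBW Q A) (hFA : M.FA) (w : ℕ → A) :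
    ¬ M.Accepts w ↔
      ∃ k > 0, ∀ l ≥ k, ∀ q ∈ M.V w l, q ∈ M.F → M.FiniteVertexE w l q := by
  constructor
  · intro hna
    by_contra hns
    refine hna (NBW.accepts_of_frequently_exists_infinite_vertex_mem_F ?_)
    refine frequently_atTop.2 fun k => ?_
    push Not at hns
    obtain ⟨l, hl, q, hq, hqF, hinf⟩ := hns (k + 1) k.succ_pos
    exact ⟨l, by omega, q, hq, hqF, hinf⟩
  · rintro ⟨k, -, hk⟩ ⟨ρ, hρ⟩
    obtain ⟨N, hN⟩ := eventually_atTop.1 (hρ.eventually_edgeE hFA)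
    obtain ⟨m, hm, hmF⟩ := hρ.2 (max k N)
    exact hk m (by omega) (ρ m) (hρ.1.mem_V m) hmF
      ⟨fun i => ρ (m + i), rfl, hρ.1.mem_V m, fun i => hN (m + i) (by omega)⟩
end

section
/- In the slice-based DAG construction, the sets at each level are pairwise disjoint, and each vertex at level l+1 has exactly one predecessor at level l (the DAG G^s_{w,A} is co-deterministic). -/
open Classical

variable {Q : Type} {A : Type}

namespace NBW

/-- The set `S'_q` of level `l + 1`, before only the rightmost occurrence of each state is kept. -/
noncomputable def sliceCandidate (M : NBW Q A) (w : ℕ → A) (l q : ℕ) : Set Q :=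
  if q % 2 = 0 then M.δset (M.sliceSet w l (q / 2)) (w l) \ M.F
  else M.δset (M.sliceSet w l (q / 2)) (w l) ∩ M.F

theorem sliceSet_succ (M : NBW Q A) (w : ℕ → A) (l p : ℕ) :
    M.sliceSet w (l + 1) p = M.sliceCandidate w l p \ ⋃ q ∈ Set.Ioi p, M.sliceCandidate w l q :=
  rfl

theorem sliceCandidate_subset_δset (M : NBW Q A) (w : ℕ → A) (l q : ℕ) :
    M.sliceCandidate w l q ⊆ M.δset (M.sliceSet w l (q / 2)) (w l) := by
  unfold sliceCandidate
  split_ifs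
  · exact Set.sdiff_subset
  · exact Set.inter_subset_left

theorem sliceSet_succ_subset_δset (M : NBW Q A) (w : ℕ → A) (l p : ℕ) :
    M.sliceSet w (l + 1) p ⊆ M.δset (M.sliceSet w l (p / 2)) (w l) :=
  Set.sdiff_subset.trans (M.sliceCandidate_subset_δset w l p)

theorem nonempty_of_δset_nonempty {M : NBW Q A} {S : Set Q} {a : A} (h : (M.δset S a).Nonempty) :
    S.Nonempty :=
  let ⟨q, hq, _⟩ := Set.nonempty_biUnion.1 h
  ⟨q, hq⟩

theorem sliceSet_nonempty_of_succ {M : NBW Q A} {w : ℕ → A} {l p : ℕ}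
    (h : (M.sliceSet w (l + 1) p).Nonempty) : (M.sliceSet w l (p / 2)).Nonempty :=
  nonempty_of_δset_nonempty (h.mono (M.sliceSet_succ_subset_δset w l p))

theorem sliceSet_zero_eq_empty (M : NBW Q A) (w : ℕ → A) {p : ℕ} (hp : 2 ≤ p) :
    M.sliceSet w 0 p = ∅ := by
  simp only [sliceSet, if_neg (show p ≠ 0 by omega), if_neg (show p ≠ 1 by omega)]

theorem disjoint_sliceSet_zero (M : NBW Q A) (w : ℕ → A) {p p' : ℕ} (h : p < p') :
    Disjoint (M.sliceSet w 0 p) (M.sliceSet w 0 p') := by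
  obtain rfl | hp' := (show p' = 1 ∨ 2 ≤ p' by omega)
  · obtain rfl : p = 0 := by omega
    simpa [sliceSet] using Set.disjoint_sdiff_inter
  · rw [M.sliceSet_zero_eq_empty w hp']
    exact Set.disjoint_empty _

/-- Keeping only the rightmost occurrence of each state makes the sets of a level disjoint. -/
theorem disjoint_sliceSet_succ (M : NBW Q A) (w : ℕ → A) (l : ℕ) {p p' : ℕ} (h : p < p') :
    Disjoint (M.sliceSet w (l + 1) p) (M.sliceSet w (l + 1) p') := by
  rw [Set.disjoint_left]
  intro x hx hx'
  rw [sliceSet_succ] at hx hx'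
  exact hx.2 (Set.mem_biUnion (Set.mem_Ioi.2 h) hx'.1)

open Function in
theorem pairwise_disjoint_sliceSet (M : NBW Q A) (w : ℕ → A) (l : ℕ) :
    Pairwise (Disjoint on M.sliceSet w l) := by
  rw [pairwise_disjoint_on]
  intro p p' h
  cases l with
  | zero => exact M.disjoint_sliceSet_zero w h
  | succ l => exact M.disjoint_sliceSet_succ w l h

end NBW

/-- in the slice-based DAG construction, the sets at each level are
pairwise disjoint, and each (nonempty) vertex at level `l+1` has exactly one
predecessor at level `l` (namely the position `p'/2` it was derived from); thus
`G^s_{w,M}` is co-deterministic. -/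
theorem slice_dag_codeterministic
    (M : NBW Q A) (w : ℕ → A) :
    (∀ (l p p' : ℕ), p ≠ p' → Disjoint (M.sliceSet w l p) (M.sliceSet w l p')) ∧
    (∀ (l p' : ℕ), M.sliceSet w (l + 1) p' ≠ ∅ →
      ∃! p : ℕ, M.sliceSet w l p ≠ ∅ ∧ p' / 2 = p) := by
  refine ⟨fun l _ _ hne => M.pairwise_disjoint_sliceSet w l hne, fun l p' hne => ?_⟩
  have hpred : M.sliceSet w l (p' / 2) ≠ ∅ :=
    (NBW.sliceSet_nonempty_of_succ (Set.nonempty_iff_ne_empty.2 hne)).ne_empty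
  exact ⟨p' / 2, ⟨hpred, rfl⟩, fun _ hp => hp.2.symm⟩
end
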